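/- Let d ≥ 1 and let (p_{s,t})_{0 ≤ s ≤ t} be a family of stochastic kernels on ℤ^d (p_{s,t}(x,y) ≥ 0, Σ_{y} p_{s,t}(x,y) = 1) satisfying the Chapman–Kolmogorov equations Σ_{z ∈ ℤ^d} p_{s,r}(x,z) p_{r,t}(z,y) = p_{s,t}(x,y) for 0 ≤ s ≤ r ≤ t. Assume there exist constants C > 1, c > 0 and γ > 0 such that for all N ∈ ℕ, all x, y ∈ ℤ^d and all 0 ≤ s ≤ t: (I) p_{sN², tN²}(x, y) ≤ C · N^{−d} (1/N ∨ √(t−s))^{−d} · exp( −|x/N − y/N| / (1/N ∨ √(t−s)) ); and (II) for every bounded f : ℝ^d → ℝ, every h ≥ 0 and every s < t, |S^N_{sN², (t+h)N²} f(x/N) − S^N_{sN², tN²} f(y/N)| ≤ c · (sup_{z ∈ ℤ^d} |f(z/N)|) · ( (√h ∨ |x/N − y/N|) / √(t−s) )^γ. Then for every bounded f : ℝ^d → ℝ and every t > 0, lim_{ε → 0⁺} limsup_{ϑ → 0⁺} limsup_{N → ∞} sup_{0 ≤ h ≤ ϑ} sup_{x, y ∈ ℤ^d : |x/N − y/N|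 < ε} | S^N_{hN², (t+h)N²} f(x/N) − S^N_{0, tN²} f(y/N) | = 0 (where ϑ is restricted to ϑ < t). -/

import Mathlib

open MeasureTheory Set Filter

/-- The rescaled lattice point `x/N ∈ ℝ^d`, for `x ∈ ℤ^d`. -/
noncomputable def latPt (d N : ℕ) (x : Fin d → ℤ) : EuclideanSpace ℝ (Fin d) :=
  WithLp.toLp 2 (fun i => (x i : ℝ) / (N : ℝ))

/-- The lattice semigroup `S^N_{s,t} f(x/N) = ∑_y p_{s,t}(x,y) f(y/N)` associated to a family
of kernels `p` on `ℤ^d`. -/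
noncomputable def SN {d : ℕ} (p : ℝ → ℝ → (Fin d → ℤ) → (Fin d → ℤ) → ℝ)
    (N : ℕ) (s t : ℝ) (f : EuclideanSpace ℝ (Fin d) → ℝ) (x : Fin d → ℤ) : ℝ :=
  ∑' y, p s t x y * f (latPt d N y)

set_option maxHeartbeats 1000000

/- ## Auxiliary lemmas -/

lemma abs_tsum_le' {ι : Type*} (g : ι → ℝ) (hg : Summable fun i => |g i|) :
    |∑' i, g i| ≤ ∑' i, |g i| := by
  rw [← Real.norm_eq_abs]
  have h := norm_tsum_le_tsum_norm (f := g) (by simp only [Real.norm_eq_abs]; exact hg)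
  simp only [Real.norm_eq_abs] at h
  exact h

lemma coord_le_norm {d : ℕ} (v : EuclideanSpace ℝ (Fin d)) (i : Fin d) : |v i| ≤ ‖v‖ := by
  rw [EuclideanSpace.norm_eq, ← Real.sqrt_sq_eq_abs]
  apply Real.sqrt_le_sqrt
  calc v i ^ 2 = ‖v i‖ ^ 2 := by simp [sq_abs]
    _ ≤ ∑ j, ‖v j‖ ^ 2 :=
      Finset.single_le_sum (f := fun j => ‖v j‖ ^ 2) (fun j _ => by positivity)
        (Finset.mem_univ i)

lemma int_exp_key_nat (a : ℝ) (n : ℕ) :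
    Real.exp (-(a * |((n:ℤ):ℝ)|)) = Real.exp (-a) ^ n := by
  rw [← Real.exp_nat_mul]
  congr 1
  have : |((n:ℤ):ℝ)| = (n:ℝ) := by push_cast; exact abs_of_nonneg (by positivity)
  rw [this]; ring

lemma int_exp_key_neg (a : ℝ) (n : ℕ) :
    Real.exp (-(a * |(↑(-((n:ℤ)+1)) : ℝ)|)) = Real.exp (-a) ^ (n+1) := by
  rw [← Real.exp_nat_mul]
  congr 1
  have : |(↑(-((n:ℤ)+1)) : ℝ)| = ((n:ℝ)+1) := by
    push_cast; rw [abs_neg, abs_of_nonneg (by positivity)]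
  rw [this]; push_cast; ring

lemma int_exp_summable {a : ℝ} (ha : 0 < a) :
    Summable (fun k : ℤ => Real.exp (-(a * |(k : ℝ)|))) := by
  have hq0 : (0:ℝ) ≤ Real.exp (-a) := Real.exp_nonneg _
  have hq1 : Real.exp (-a) < 1 := Real.exp_lt_one_iff.mpr (by linarith)
  have hsum : Summable (fun n : ℕ => Real.exp (-a) ^ n) :=
    summable_geometric_of_lt_one hq0 hq1
  apply Summable.of_nat_of_neg_add_one
  · exact (summable_congr fun n => int_exp_key_nat a n).2 hsum
  · exact (summable_congr fun n => int_exp_key_neg a n).2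
      (hsum.comp_injective (add_left_injective 1))

lemma int_exp_tsum_le {a : ℝ} (ha : 0 < a) :
    ∑' k : ℤ, Real.exp (-(a * |(k : ℝ)|)) ≤ 2 + 2 / a := by
  have hq0 : (0:ℝ) ≤ Real.exp (-a) := Real.exp_nonneg _
  have hq1 : Real.exp (-a) < 1 := Real.exp_lt_one_iff.mpr (by linarith)
  set q := Real.exp (-a) with hq
  have hsum : Summable (fun n : ℕ => q ^ n) := summable_geometric_of_lt_one hq0 hq1
  have hsum1 : Summable (fun n : ℕ => q ^ (n+1)) := hsum.comp_injective (add_left_injective 1)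
  have h1 : Summable (fun n : ℕ => Real.exp (-(a * |((n:ℤ):ℝ)|))) := by
    simp_rw [int_exp_key_nat]; exact hsum
  have h2 : Summable (fun n : ℕ => Real.exp (-(a * |(↑(-((n:ℤ)+1)) : ℝ)|))) := by
    exact (summable_congr fun n => int_exp_key_neg a n).2 hsum1
  rw [tsum_of_nat_of_neg_add_one h1 h2]
  have geo : ∑' n : ℕ, q ^ n = (1 - q)⁻¹ := tsum_geometric_of_lt_one hq0 hq1
  have e1 : ∑' n : ℕ, Real.exp (-(a * |(((n:ℤ)):ℝ)|)) = (1-q)⁻¹ := by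
    simp_rw [int_exp_key_nat]; exact geo
  have e2 : ∑' n : ℕ, Real.exp (-(a * |(↑(-((n:ℤ)+1)) : ℝ)|)) ≤ (1-q)⁻¹ := by
    simp_rw [int_exp_key_neg]
    rw [← geo]
    exact Summable.tsum_le_tsum (fun n => pow_le_pow_of_le_one hq0 hq1.le (Nat.le_succ n)) hsum1 hsum
  have hb : (1 - q)⁻¹ ≤ 1 + 1 / a := by
    have hqle : q ≤ 1 / (1 + a) := by
      rw [hq, Real.exp_neg, inv_eq_one_div, div_le_div_iff₀ (Real.exp_pos a) (by linarith)]
      linarith [Real.add_one_le_exp a]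
    have h1q : a / (1 + a) ≤ 1 - q := by
      have he : 1 - 1 / (1 + a) = a / (1 + a) := by field_simp; ring
      linarith
    have hpos : 0 < a / (1 + a) := by positivity
    calc (1 - q)⁻¹ ≤ (a / (1+a))⁻¹ := inv_anti₀ hpos h1q
      _ = (1+a)/a := by rw [inv_div]
      _ = 1 + 1/a := by field_simp; ring
  calc ∑' n : ℕ, Real.exp (-(a * |(((n:ℤ)):ℝ)|))
        + ∑' n : ℕ, Real.exp (-(a * |(↑(-((n:ℤ)+1)) : ℝ)|))
      ≤ (1-q)⁻¹ + (1-q)⁻¹ := by rw [e1]; exact add_le_add le_rfl e2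
    _ ≤ (1 + 1/a) + (1 + 1/a) := add_le_add hb hb
    _ = 2 + 2/a := by ring

lemma pi_prod_summable_tsum (g : ℤ → ℝ) (hg0 : ∀ k, 0 ≤ g k) (hg : Summable g) :
    ∀ n : ℕ, Summable (fun u : Fin n → ℤ => ∏ i, g (u i)) ∧
      (∑' u : Fin n → ℤ, ∏ i, g (u i)) = (∑' k, g k) ^ n := by
  intro n
  induction n with
  | zero =>
    constructor
    · exact Summable.of_finite
    · rw [pow_zero]
      rw [tsum_eq_single (fun i => 0) (fun b hb => absurd (funext fun i => i.elim0) hb)]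
      simp
  | succ n ih =>
    let e : (Fin (n+1) → ℤ) ≃ ℤ × (Fin n → ℤ) :=
      ⟨fun u => (u 0, fun i => u i.succ), fun q => Fin.cons q.1 q.2,
        fun u => funext fun i => by cases i using Fin.cases <;> simp,
        fun q => by ext <;> simp⟩
    set F : ℤ × (Fin n → ℤ) → ℝ := fun q => g q.1 * ∏ i, g (q.2 i) with hF
    have hcomp : ∀ u : Fin (n+1) → ℤ, (∏ i, g (u i)) = F (e u) := by
      intro u
      rw [Fin.prod_univ_succ]
      rfl
    have hFsum : Summable F := by
      apply (summable_prod_of_nonneg ?_).2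
      · constructor
        · intro k
          simp only [hF]
          exact (ih.1).mul_left _
        · have : ∀ k : ℤ, ∑' v : Fin n → ℤ, F (k, v) = g k * (∑' k, g k) ^ n := by
            intro k
            rw [hF]
            simp only
            rw [tsum_mul_left, ih.2]
          simp_rw [this]
          exact hg.mul_right _
      · intro q
        exact mul_nonneg (hg0 _) (Finset.prod_nonneg fun i _ => hg0 _)
    constructor
    · rw [summable_congr hcomp]
      exact hFsum.comp_injective e.injective
    · have h1 : (∑' u : Fin (n+1) → ℤ, ∏ i, g (u i)) = ∑' q, F q := by
        rw [tsum_congr hcomp]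
        exact e.tsum_eq F
      rw [h1, Summable.tsum_prod hFsum]
      have : ∀ k : ℤ, ∑' v : Fin n → ℤ, F (k, v) = g k * (∑' k, g k) ^ n := by
        intro k
        rw [hF]; simp only; rw [tsum_mul_left, ih.2]
      simp_rw [this]
      rw [tsum_mul_right, pow_succ]
      ring

lemma latPt_sub (d N : ℕ) (x y : Fin d → ℤ) :
    latPt d N x - latPt d N y = latPt d N (x - y) := by
  ext i
  simp [latPt, sub_div]

lemma latPt_l1 (d N : ℕ) (hN : 1 ≤ N) (u : Fin d → ℤ) :
    ∑ i, |(u i : ℝ)| ≤ (d : ℝ) * ((N : ℝ) * ‖latPt d N u‖) := by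
  have hN0 : (0:ℝ) < N := by exact_mod_cast hN
  have h1 : ∀ i, |(u i : ℝ)| ≤ (N : ℝ) * ‖latPt d N u‖ := by
    intro i
    have hco := coord_le_norm (latPt d N u) i
    have h2 : |latPt d N u i| = |(u i : ℝ)| / N := by
      rw [latPt, PiLp.toLp_apply, abs_div, abs_of_pos hN0]
    rw [h2] at hco
    calc |(u i : ℝ)| = (|(u i : ℝ)| / N) * N := by field_simp
      _ ≤ ‖latPt d N u‖ * N := by
          apply mul_le_mul_of_nonneg_right hco hN0.le
      _ = (N : ℝ) * ‖latPt d N u‖ := by ring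
  calc ∑ i, |(u i : ℝ)| ≤ ∑ _i : Fin d, (N : ℝ) * ‖latPt d N u‖ :=
        Finset.sum_le_sum fun i _ => h1 i
    _ = (d : ℝ) * ((N : ℝ) * ‖latPt d N u‖) := by
        rw [Finset.sum_const]; simp [mul_comm]

lemma lattice_bound (d N : ℕ) (hd : 1 ≤ d) (hN : 1 ≤ N) (r : ℝ) (hr : (N:ℝ)⁻¹ ≤ r)
    (y : Fin d → ℤ) :
    Summable (fun z : Fin d → ℤ => Real.exp (-‖latPt d N z - latPt d N y‖ / (2*r))) ∧
    ∑' z : Fin d → ℤ, Real.exp (-‖latPt d N z - latPt d N y‖ / (2*r)) ≤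
      (6*d)^d * ((N:ℝ)*r)^d := by
  have hN0 : (0:ℝ) < N := by exact_mod_cast hN
  have hr0 : 0 < r := lt_of_lt_of_le (by positivity) hr
  have hNr : (1:ℝ) ≤ (N:ℝ) * r := by
    calc (1:ℝ) = (N:ℝ) * (N:ℝ)⁻¹ := by field_simp
      _ ≤ (N:ℝ) * r := by apply mul_le_mul_of_nonneg_left hr hN0.le
  set a : ℝ := ((2:ℝ) * r * d * N)⁻¹ with ha
  have hd0 : (0:ℝ) < d := by exact_mod_cast hd
  have ha0 : 0 < a := by rw [ha]; positivity
  set g : ℤ → ℝ := fun k => Real.exp (-(a * |(k:ℝ)|)) with hg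
  have hg0 : ∀ k, 0 ≤ g k := fun k => Real.exp_nonneg _
  have hgsum : Summable g := int_exp_summable ha0
  obtain ⟨hGsum, hGtsum⟩ := pi_prod_summable_tsum g hg0 hgsum d
  have hpt : ∀ u : Fin d → ℤ, Real.exp (-‖latPt d N u‖ / (2*r)) ≤ ∏ i, g (u i) := by
    intro u
    have l1 := latPt_l1 d N hN u
    have key : ∑ i, (a * |(u i : ℝ)|) ≤ ‖latPt d N u‖ / (2*r) := by
      rw [← Finset.mul_sum, ha, inv_mul_le_iff₀ (by positivity)]
      calc ∑ i, |(u i : ℝ)| ≤ (d : ℝ) * ((N : ℝ) * ‖latPt d N u‖) := l1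
        _ = 2 * r * d * N * (‖latPt d N u‖ / (2 * r)) := by field_simp
    have hprod : ∏ i, g (u i) = Real.exp (-∑ i, (a * |(u i : ℝ)|)) := by
      rw [hg, ← Real.exp_sum]
      congr 1
      rw [← Finset.sum_neg_distrib]
    rw [hprod]
    apply Real.exp_le_exp.2
    rw [neg_div]
    exact neg_le_neg key
  have hsum0 : Summable (fun u : Fin d → ℤ => Real.exp (-‖latPt d N u‖ / (2*r))) := by
    apply Summable.of_nonneg_of_le (fun u => Real.exp_nonneg _) hpt hGsum
  have htrans : ∀ z : Fin d → ℤ,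
      Real.exp (-‖latPt d N z - latPt d N y‖ / (2*r)) =
        (fun u => Real.exp (-‖latPt d N u‖ / (2*r))) (z - y) := by
    intro z; rw [latPt_sub]
  constructor
  · rw [summable_congr htrans]
    exact hsum0.comp_injective (sub_left_injective)
  · rw [tsum_congr htrans]
    have heq := (Equiv.subRight y).tsum_eq (fun u => Real.exp (-‖latPt d N u‖ / (2*r)))
    rw [show (fun z : Fin d → ℤ => (fun u => Real.exp (-‖latPt d N u‖ / (2*r))) (z - y))
        = fun z => Real.exp (-‖latPt d N ((Equiv.subRight y) z)‖ / (2*r)) from rfl]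
    rw [heq]
    calc ∑' u : Fin d → ℤ, Real.exp (-‖latPt d N u‖ / (2*r))
        ≤ ∑' u : Fin d → ℤ, ∏ i, g (u i) := Summable.tsum_le_tsum hpt hsum0 hGsum
      _ = (∑' k, g k) ^ d := hGtsum
      _ ≤ (6*d*((N:ℝ)*r)) ^ d := by
          apply pow_le_pow_left₀ (tsum_nonneg fun k => hg0 k)
          calc ∑' k, g k ≤ 2 + 2/a := int_exp_tsum_le ha0
            _ = 2 + 2 * (2 * r * d * N) := by rw [ha, div_inv_eq_mul]
            _ ≤ 6*d*((N:ℝ)*r) := by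
                have hd1 : (1:ℝ) ≤ d := by exact_mod_cast hd
                have h1 : (1:ℝ) ≤ (d:ℝ) * ((N:ℝ)*r) := by nlinarith
                nlinarith
      _ = (6*d)^d * ((N:ℝ)*r)^d := mul_pow _ _ _

lemma SN_summable {d : ℕ} {p : ℝ → ℝ → (Fin d → ℤ) → (Fin d → ℤ) → ℝ}
    {N : ℕ} {s t : ℝ} {f : EuclideanSpace ℝ (Fin d) → ℝ} {M : ℝ} {x : Fin d → ℤ}
    (hrow : HasSum (fun y => p s t x y) 1) (hnn : ∀ y, 0 ≤ p s t x y)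
    (hM : ∀ z : Fin d → ℤ, |f (latPt d N z)| ≤ M) :
    Summable (fun y => p s t x y * f (latPt d N y)) := by
  apply Summable.of_abs
  apply Summable.of_nonneg_of_le (fun y => abs_nonneg _) _ (hrow.summable.mul_right M)
  intro y
  rw [abs_mul, abs_of_nonneg (hnn y)]
  exact mul_le_mul_of_nonneg_left (hM y) (hnn y)

lemma abs_SN_le {d : ℕ} {p : ℝ → ℝ → (Fin d → ℤ) → (Fin d → ℤ) → ℝ}
    {N : ℕ} {s t : ℝ} {f : EuclideanSpace ℝ (Fin d) → ℝ} {M : ℝ} {x : Fin d → ℤ}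
    (hrow : HasSum (fun y => p s t x y) 1) (hnn : ∀ y, 0 ≤ p s t x y)
    (hM : ∀ z : Fin d → ℤ, |f (latPt d N z)| ≤ M) :
    |SN p N s t f x| ≤ M := by
  have hsum := SN_summable hrow hnn hM
  have habs : Summable (fun y => |p s t x y * f (latPt d N y)|) := hsum.abs
  calc |SN p N s t f x| ≤ ∑' y, |p s t x y * f (latPt d N y)| := by
        rw [SN]
        exact abs_tsum_le' _ habs
    _ ≤ ∑' y, p s t x y * M := by
        apply Summable.tsum_le_tsum _ habs (hrow.summable.mul_right M)
        intro y
        rw [abs_mul, abs_of_nonneg (hnn y)]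
        exact mul_le_mul_of_nonneg_left (hM y) (hnn y)
    _ = M := by rw [tsum_mul_right, hrow.tsum_eq, one_mul]

lemma SN_split {d : ℕ} (p : ℝ → ℝ → (Fin d → ℤ) → (Fin d → ℤ) → ℝ)
    {t₁ t₂ : ℝ}
    (hnn1 : ∀ x y, 0 ≤ p 0 t₁ x y) (hnn2 : ∀ x y, 0 ≤ p t₁ t₂ x y)
    (hrow1 : ∀ x, HasSum (fun y => p 0 t₁ x y) 1)
    (hrow2 : ∀ x, HasSum (fun y => p t₁ t₂ x y) 1)
    (hCK : ∀ x y, HasSum (fun z => p 0 t₁ x z * p t₁ t₂ z y) (p 0 t₂ x y))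
    (N : ℕ) (f : EuclideanSpace ℝ (Fin d) → ℝ) (M : ℝ)
    (hM : ∀ z : Fin d → ℤ, |f (latPt d N z)| ≤ M) (y : Fin d → ℤ) :
    SN p N 0 t₂ f y = ∑' z, p 0 t₁ y z * SN p N t₁ t₂ f z := by
  have hM0 : 0 ≤ M := (abs_nonneg _).trans (hM 0)
  set G : (Fin d → ℤ) × (Fin d → ℤ) → ℝ := fun q => p 0 t₁ y q.1 * p t₁ t₂ q.1 q.2 with hG
  have hG0 : (0:((Fin d → ℤ) × (Fin d → ℤ)) → ℝ) ≤ G := by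
    intro q; exact mul_nonneg (hnn1 _ _) (hnn2 _ _)
  have hGsum : Summable G := by
    apply (summable_prod_of_nonneg hG0).2
    constructor
    · intro z
      simp only [hG]
      exact ((hrow2 z).summable).mul_left _
    · have : ∀ z, ∑' w, G (z, w) = p 0 t₁ y z := by
        intro z
        rw [hG]
        simp only
        rw [tsum_mul_left, (hrow2 z).tsum_eq, mul_one]
      simp_rw [this]
      exact (hrow1 y).summable
  set F : (Fin d → ℤ) × (Fin d → ℤ) → ℝ := fun q => G q * f (latPt d N q.2) with hF
  have hFsum : Summable F := by
    apply Summable.of_abs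
    apply Summable.of_nonneg_of_le (fun q => abs_nonneg _) _ (hGsum.mul_right M)
    intro q
    rw [hF]
    simp only
    rw [abs_mul, abs_of_nonneg (hG0 q)]
    exact mul_le_mul_of_nonneg_left (hM _) (hG0 q)
  have rhs : ∑' z, p 0 t₁ y z * SN p N t₁ t₂ f z = ∑' q, F q := by
    rw [Summable.tsum_prod hFsum]
    congr 1
    funext z
    have : ∀ w, F (z, w) = p 0 t₁ y z * (p t₁ t₂ z w * f (latPt d N w)) := by
      intro w; rw [hF, hG]; simp only; ring
    rw [tsum_congr this, tsum_mul_left, SN]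
  have lhs : SN p N 0 t₂ f y = ∑' (w) (z), F (z, w) := by
    rw [SN]
    congr 1
    funext w
    have h1 : ∑' z, F (z, w) = (∑' z, p 0 t₁ y z * p t₁ t₂ z w) * f (latPt d N w) := by
      rw [← tsum_mul_right]
    rw [h1, (hCK y w).tsum_eq]
  rw [lhs, rhs, Summable.tsum_prod hFsum]
  exact Summable.tsum_comm (f := fun z w => F (z, w)) hFsum

/-- The set of deviations appearing in Lemma C.2. -/
noncomputable def devSet {d : ℕ} (p : ℝ → ℝ → (Fin d → ℤ) → (Fin d → ℤ) → ℝ)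
    (f : EuclideanSpace ℝ (Fin d) → ℝ) (t ε ϑ : ℝ) (N : ℕ) : Set ℝ :=
  {a : ℝ | ∃ h : ℝ, 0 ≤ h ∧ h ≤ ϑ ∧ ∃ x y : Fin d → ℤ,
    ‖latPt d N x - latPt d N y‖ < ε ∧
    a = |SN p N (h * (N:ℝ)^2) ((t + h) * (N:ℝ)^2) f x - SN p N 0 (t * (N:ℝ)^2) f y|}

/-- Lemma C.2: Hölder continuity of the random walk semigroups from the
Gaussian kernel upper bound and the Nash continuity estimate. -/
theorem stmt16 (d : ℕ) (hd : 1 ≤ d)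
    (p : ℝ → ℝ → (Fin d → ℤ) → (Fin d → ℤ) → ℝ)
    (hp_nonneg : ∀ s t : ℝ, 0 ≤ s → s ≤ t → ∀ x y, 0 ≤ p s t x y)
    (hp_row : ∀ s t : ℝ, 0 ≤ s → s ≤ t → ∀ x, HasSum (fun y => p s t x y) 1)
    (hCK : ∀ s r t : ℝ, 0 ≤ s → s ≤ r → r ≤ t → ∀ x y,
      HasSum (fun z => p s r x z * p r t z y) (p s t x y))
    (C c γ : ℝ) (hC : 1 < C) (hc : 0 < c) (hγ : 0 < γ)
    -- (I) kernel upper bound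
    (hI : ∀ N : ℕ, 1 ≤ N → ∀ x y : Fin d → ℤ, ∀ s t : ℝ, 0 ≤ s → s ≤ t →
      p (s * (N:ℝ)^2) (t * (N:ℝ)^2) x y ≤
        C / ((N:ℝ)^d * (max ((N:ℝ)⁻¹) (Real.sqrt (t - s)))^d) *
          Real.exp (-‖latPt d N x - latPt d N y‖ / max ((N:ℝ)⁻¹) (Real.sqrt (t - s))))
    -- (II) Nash continuity estimate
    (hII : ∀ N : ℕ, 1 ≤ N → ∀ f : EuclideanSpace ℝ (Fin d) → ℝ, ∀ M : ℝ,
      (∀ z : Fin d → ℤ, |f (latPt d N z)| ≤ M) →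
      ∀ h : ℝ, 0 ≤ h → ∀ s t : ℝ, 0 ≤ s → s < t → ∀ x y : Fin d → ℤ,
        |SN p N (s * (N:ℝ)^2) ((t + h) * (N:ℝ)^2) f x - SN p N (s * (N:ℝ)^2) (t * (N:ℝ)^2) f y| ≤
          c * M * ((max (Real.sqrt h) ‖latPt d N x - latPt d N y‖ / Real.sqrt (t - s)) ^ γ)) :
    ∀ f : EuclideanSpace ℝ (Fin d) → ℝ, (∃ M : ℝ, ∀ u, |f u| ≤ M) → ∀ t : ℝ, 0 < t →
      Tendsto
        (fun ε : ℝ =>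
          Filter.limsup
            (fun ϑ : ℝ =>
              Filter.limsup
                (fun N : ℕ =>
                  sSup {a : ℝ | ∃ h : ℝ, 0 ≤ h ∧ h ≤ ϑ ∧ ∃ x y : Fin d → ℤ,
                    ‖latPt d N x - latPt d N y‖ < ε ∧
                    a = |SN p N (h * (N:ℝ)^2) ((t + h) * (N:ℝ)^2) f x -
                          SN p N 0 (t * (N:ℝ)^2) f y|})
                atTop)
            (nhdsWithin 0 (Ioo 0 t)))
        (nhdsWithin 0 (Ioi 0)) (nhds 0) := by
  intro f hMex t ht
  obtain ⟨M, hM⟩ := hMex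
  have hM0 : 0 ≤ M := (abs_nonneg _).trans (hM 0)
  have hC0 : (0:ℝ) < C := lt_trans zero_lt_one hC
  have hd0 : (0:ℝ) < d := by exact_mod_cast hd
  set Kd : ℝ := ((6:ℝ)*d)^d with hKd
  have hKd0 : 0 < Kd := pow_pos (by nlinarith) d
  set B : ℝ → ℝ → ℝ := fun ε ϑ =>
    c*M*((max (Real.sqrt ϑ) ε)/Real.sqrt (t-ϑ))^γ + c*M*(ε/Real.sqrt (t-ϑ))^γ +
    2*M*C*Kd*Real.exp (-(ε/2 * (Real.sqrt ϑ)⁻¹)) with hB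
  -- the key deterministic estimate
  have key : ∀ ε : ℝ, 0 < ε → ∀ ϑ, ϑ ∈ Ioo 0 t → ∀ N : ℕ, 1 ≤ N →
      (N:ℝ)⁻¹ ≤ Real.sqrt ϑ → ∀ a ∈ devSet p f t ε ϑ N, a ≤ B ε ϑ := by
    rintro ε hε ϑ hϑ N hN1 hNϑ a ⟨h, hh0, hhϑ, x, y, hxy, rfl⟩
    have hϑt : ϑ < t := hϑ.2
    have hht : h < t := lt_of_le_of_lt hhϑ hϑt
    have htϑ : 0 < t - ϑ := sub_pos.2 hϑt
    have hth : t - ϑ ≤ t - h := by linarith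
    have hsϑ : 0 < Real.sqrt (t - ϑ) := Real.sqrt_pos.2 htϑ
    have hsh : Real.sqrt (t-ϑ) ≤ Real.sqrt (t-h) := Real.sqrt_le_sqrt hth
    have hN0 : (0:ℝ) < N := by exact_mod_cast hN1
    set r : ℝ := max (N:ℝ)⁻¹ (Real.sqrt h) with hrdef
    have hrN : (N:ℝ)⁻¹ ≤ r := le_max_left _ _
    have hr0 : 0 < r := lt_of_lt_of_le (by positivity) hrN
    have hrϑ : r ≤ Real.sqrt ϑ := max_le hNϑ (Real.sqrt_le_sqrt hhϑ)
    have hMlat : ∀ z : Fin d → ℤ, |f (latPt d N z)| ≤ M := fun z => hM _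
    have hhN2 : (0:ℝ) ≤ h * (N:ℝ)^2 := by positivity
    have htN2 : h * (N:ℝ)^2 ≤ t * (N:ℝ)^2 :=
      mul_le_mul_of_nonneg_right hht.le (by positivity)
    have hnn1 : ∀ x' y', 0 ≤ p 0 (h*(N:ℝ)^2) x' y' := hp_nonneg 0 _ le_rfl hhN2
    have hrow1 := hp_row 0 (h*(N:ℝ)^2) le_rfl hhN2
    have hnn2 : ∀ x' y', 0 ≤ p (h*(N:ℝ)^2) (t*(N:ℝ)^2) x' y' := hp_nonneg _ _ hhN2 htN2
    have hrow2 := hp_row (h*(N:ℝ)^2) (t*(N:ℝ)^2) hhN2 htN2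
    have hCK' := hCK 0 (h*(N:ℝ)^2) (t*(N:ℝ)^2) le_rfl hhN2 htN2
    set u : (Fin d → ℤ) → ℝ := fun z => SN p N (h*(N:ℝ)^2) (t*(N:ℝ)^2) f z with hu
    have hub : ∀ z, |u z| ≤ M := fun z => abs_SN_le (hrow2 z) (fun w => hnn2 z w) hMlat
    -- Step 1
    have step1 : |SN p N (h*(N:ℝ)^2) ((t+h)*(N:ℝ)^2) f x - u y| ≤
        c*M*((max (Real.sqrt ϑ) ε)/Real.sqrt (t-ϑ))^γ := by
      have h1 := hII N hN1 f M hMlat h hh0 h t hh0 hht x y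
      refine h1.trans ?_
      apply mul_le_mul_of_nonneg_left _ (by positivity)
      apply Real.rpow_le_rpow (by positivity) _ hγ.le
      apply div_le_div₀ (le_trans hε.le (le_max_right _ _)) _ hsϑ hsh
      exact max_le_max (Real.sqrt_le_sqrt hhϑ) hxy.le
    -- Step 2
    have hid : SN p N 0 (t*(N:ℝ)^2) f y = ∑' z, p 0 (h*(N:ℝ)^2) y z * u z :=
      SN_split p hnn1 hnn2 hrow1 hrow2 (fun x' y' => hCK' x' y') N f M hMlat y
    have husum : Summable (fun z => p 0 (h*(N:ℝ)^2) y z * u z) := by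
      apply Summable.of_abs
      apply Summable.of_nonneg_of_le (fun z => abs_nonneg _) _
        (((hrow1 y).summable).mul_right M)
      intro z
      rw [abs_mul, abs_of_nonneg (hnn1 y z)]
      exact mul_le_mul_of_nonneg_left (hub z) (hnn1 y z)
    have hconst : u y = ∑' z, p 0 (h*(N:ℝ)^2) y z * u y := by
      rw [tsum_mul_right, (hrow1 y).tsum_eq, one_mul]
    obtain ⟨hlat_sum, hlat_bound⟩ := lattice_bound d N hd hN1 r hrN y
    have h2M : ∀ z, |u y - u z| ≤ 2*M := by
      intro z
      calc |u y - u z| = |u y + -(u z)| := by rw [sub_eq_add_neg]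
        _ ≤ |u y| + |-(u z)| := abs_add_le _ _
        _ = |u y| + |u z| := by rw [abs_neg]
        _ ≤ M + M := add_le_add (hub y) (hub z)
        _ = 2*M := by ring
    set c1 : ℝ := c*M*(ε/Real.sqrt (t-h))^γ with hc1
    set c2 : ℝ := 2*M*C*((N:ℝ)^d * r^d)⁻¹ * Real.exp (-(ε/(2*r))) with hc2
    have hc10 : 0 ≤ c1 := by
      rw [hc1]
      apply mul_nonneg (by positivity) (Real.rpow_nonneg (by positivity) _)
    have hc20 : 0 ≤ c2 := by rw [hc2]; positivity
    have hptw : ∀ z, p 0 (h*(N:ℝ)^2) y z * |u y - u z| ≤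
        c1 * p 0 (h*(N:ℝ)^2) y z + c2 * Real.exp (-‖latPt d N z - latPt d N y‖/(2*r)) := by
      intro z
      by_cases hz : ‖latPt d N z - latPt d N y‖ ≤ ε
      · have h2 := hII N hN1 f M hMlat 0 le_rfl h t hh0 hht y z
        rw [add_zero] at h2
        have hbase : max (Real.sqrt 0) ‖latPt d N y - latPt d N z‖
            = ‖latPt d N z - latPt d N y‖ := by
          rw [Real.sqrt_zero, max_eq_right (norm_nonneg _), norm_sub_rev]
        rw [hbase] at h2
        have h3 : |u y - u z| ≤ c1 := by
          refine h2.trans ?_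
          rw [hc1]
          apply mul_le_mul_of_nonneg_left _ (by positivity)
          apply Real.rpow_le_rpow (by positivity) _ hγ.le
          exact div_le_div₀ hε.le hz (Real.sqrt_pos.2 (by linarith)) le_rfl
        calc p 0 (h*(N:ℝ)^2) y z * |u y - u z| ≤ p 0 (h*(N:ℝ)^2) y z * c1 :=
              mul_le_mul_of_nonneg_left h3 (hnn1 y z)
          _ = c1 * p 0 (h*(N:ℝ)^2) y z := mul_comm _ _
          _ ≤ _ := le_add_of_nonneg_right
              (mul_nonneg hc20 (Real.exp_nonneg _))
      · push_neg at hz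
        have hP := hI N hN1 y z 0 h le_rfl hh0
        rw [zero_mul, sub_zero, ← hrdef] at hP
        have hsplit : Real.exp (-‖latPt d N y - latPt d N z‖ / r) ≤
            Real.exp (-(ε/(2*r))) * Real.exp (-‖latPt d N z - latPt d N y‖/(2*r)) := by
          rw [← Real.exp_add, norm_sub_rev (latPt d N y)]
          apply Real.exp_le_exp.2
          have h2r : (0:ℝ) < 2*r := by positivity
          have hd1 : ε/(2*r) ≤ ‖latPt d N z - latPt d N y‖/(2*r) :=
            (div_le_div_iff_of_pos_right h2r).2 hz.le
          have e : ‖latPt d N z - latPt d N y‖/r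
              = ‖latPt d N z - latPt d N y‖/(2*r) + ‖latPt d N z - latPt d N y‖/(2*r) := by
            field_simp
            ring
          rw [neg_div, neg_div]
          linarith
        calc p 0 (h*(N:ℝ)^2) y z * |u y - u z|
            ≤ (C / ((N:ℝ)^d * r^d) * Real.exp (-‖latPt d N y - latPt d N z‖ / r)) * (2*M) :=
              mul_le_mul hP (h2M z) (abs_nonneg _) (by positivity)
          _ ≤ (C / ((N:ℝ)^d * r^d) *
                (Real.exp (-(ε/(2*r))) * Real.exp (-‖latPt d N z - latPt d N y‖/(2*r)))) * (2*M) := by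
              apply mul_le_mul_of_nonneg_right _ (by positivity)
              exact mul_le_mul_of_nonneg_left hsplit (by positivity)
          _ = c2 * Real.exp (-‖latPt d N z - latPt d N y‖/(2*r)) := by rw [hc2]; ring
          _ ≤ _ := le_add_of_nonneg_left (mul_nonneg hc10 (hnn1 y z))
    have hlhs_sum : Summable (fun z => p 0 (h*(N:ℝ)^2) y z * |u y - u z|) := by
      apply Summable.of_nonneg_of_le (fun z => mul_nonneg (hnn1 y z) (abs_nonneg _))
        (fun z => mul_le_mul_of_nonneg_left (h2M z) (hnn1 y z))
        (((hrow1 y).summable).mul_right (2*M))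
    have hrhs_sum1 : Summable (fun z => c1 * p 0 (h*(N:ℝ)^2) y z) :=
      ((hrow1 y).summable).mul_left c1
    have hrhs_sum2 : Summable
        (fun z => c2 * Real.exp (-‖latPt d N z - latPt d N y‖/(2*r))) :=
      hlat_sum.mul_left c2
    have hcs : Summable (fun z => p 0 (h*(N:ℝ)^2) y z * u y) :=
      ((hrow1 y).summable).mul_right _
    have e0 : ∑' z, (p 0 (h*(N:ℝ)^2) y z * u y - p 0 (h*(N:ℝ)^2) y z * u z)
        = u y - SN p N 0 (t*(N:ℝ)^2) f y := by
      rw [Summable.tsum_sub hcs husum, ← hconst, ← hid]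
    have habseq : ∀ z, |p 0 (h*(N:ℝ)^2) y z * u y - p 0 (h*(N:ℝ)^2) y z * u z|
        = p 0 (h*(N:ℝ)^2) y z * |u y - u z| := by
      intro z; rw [← mul_sub, abs_mul, abs_of_nonneg (hnn1 y z)]
    have habs2 : Summable
        (fun z => |p 0 (h*(N:ℝ)^2) y z * u y - p 0 (h*(N:ℝ)^2) y z * u z|) :=
      (summable_congr habseq).2 hlhs_sum
    have step2 : |u y - SN p N 0 (t*(N:ℝ)^2) f y| ≤ c1 + c2 * (Kd * ((N:ℝ)*r)^d) := by
      rw [← e0]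
      refine (abs_tsum_le' _ habs2).trans ?_
      calc ∑' z, |p 0 (h*(N:ℝ)^2) y z * u y - p 0 (h*(N:ℝ)^2) y z * u z|
          = ∑' z, p 0 (h*(N:ℝ)^2) y z * |u y - u z| := tsum_congr habseq
        _ ≤ ∑' z, (c1 * p 0 (h*(N:ℝ)^2) y z
              + c2 * Real.exp (-‖latPt d N z - latPt d N y‖/(2*r))) :=
            Summable.tsum_le_tsum hptw hlhs_sum (hrhs_sum1.add hrhs_sum2)
        _ = c1 * (∑' z, p 0 (h*(N:ℝ)^2) y z)
              + c2 * ∑' z, Real.exp (-‖latPt d N z - latPt d N y‖/(2*r)) := by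
            rw [Summable.tsum_add hrhs_sum1 hrhs_sum2, tsum_mul_left, tsum_mul_left]
        _ = c1 + c2 * ∑' z, Real.exp (-‖latPt d N z - latPt d N y‖/(2*r)) := by
            rw [(hrow1 y).tsum_eq, mul_one]
        _ ≤ c1 + c2 * (Kd * ((N:ℝ)*r)^d) := by
            apply add_le_add le_rfl
            apply mul_le_mul_of_nonneg_left _ hc20
            calc ∑' z, Real.exp (-‖latPt d N z - latPt d N y‖/(2*r))
                ≤ (6*d)^d * ((N:ℝ)*r)^d := hlat_bound
              _ = Kd * ((N:ℝ)*r)^d := by rw [hKd]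
    -- converting the bounds to B
    have hcc1 : c1 ≤ c*M*(ε/Real.sqrt (t-ϑ))^γ := by
      rw [hc1]
      apply mul_le_mul_of_nonneg_left _ (by positivity)
      apply Real.rpow_le_rpow (by positivity) _ hγ.le
      exact div_le_div₀ hε.le le_rfl hsϑ hsh
    have hcc2 : c2 * (Kd * ((N:ℝ)*r)^d) ≤ 2*M*C*Kd*Real.exp (-(ε/2 * (Real.sqrt ϑ)⁻¹)) := by
      have hXd : ((N:ℝ)*r)^d = (N:ℝ)^d * r^d := mul_pow _ _ _
      have hX0 : (0:ℝ) < (N:ℝ)^d * r^d := by positivity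
      have heq2 : c2 * (Kd * ((N:ℝ)*r)^d) = 2*M*C*Kd * Real.exp (-(ε/(2*r))) := by
        rw [hc2, hXd]
        field_simp
      rw [heq2]
      apply mul_le_mul_of_nonneg_left _ (by positivity)
      apply Real.exp_le_exp.2
      apply neg_le_neg
      calc ε/2 * (Real.sqrt ϑ)⁻¹ ≤ ε/2 * r⁻¹ := by
            apply mul_le_mul_of_nonneg_left (inv_anti₀ hr0 hrϑ) (by positivity)
        _ = ε/(2*r) := by rw [← div_eq_mul_inv, div_div]
    calc |SN p N (h*(N:ℝ)^2) ((t+h)*(N:ℝ)^2) f x - SN p N 0 (t*(N:ℝ)^2) f y|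
        ≤ |SN p N (h*(N:ℝ)^2) ((t+h)*(N:ℝ)^2) f x - u y|
          + |u y - SN p N 0 (t*(N:ℝ)^2) f y| := abs_sub_le _ _ _
      _ ≤ c*M*((max (Real.sqrt ϑ) ε)/Real.sqrt (t-ϑ))^γ + (c1 + c2 * (Kd * ((N:ℝ)*r)^d)) :=
          add_le_add step1 step2
      _ ≤ B ε ϑ := by
          rw [hB, ← add_assoc]
          exact add_le_add (add_le_add le_rfl hcc1) hcc2
  -- 0 belongs to all the sets
  have h0mem : ∀ ε : ℝ, 0 < ε → ∀ ϑ : ℝ, 0 ≤ ϑ → ∀ N : ℕ, (0:ℝ) ∈ devSet p f t ε ϑ N := by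
    intro ε hε ϑ hϑ0 N
    refine ⟨0, le_rfl, hϑ0, 0, 0, ?_, ?_⟩
    · simpa [sub_self] using hε
    · rw [zero_mul, add_zero, sub_self, abs_zero]
  -- bounds on the suprema
  have hGbounds : ∀ ε : ℝ, 0 < ε → ∀ ϑ, ϑ ∈ Ioo 0 t → ∀ N : ℕ, 1 ≤ N →
      (N:ℝ)⁻¹ ≤ Real.sqrt ϑ →
      0 ≤ sSup (devSet p f t ε ϑ N) ∧ sSup (devSet p f t ε ϑ N) ≤ B ε ϑ := by
    intro ε hε ϑ hϑ N h1 h2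
    have hbdd : BddAbove (devSet p f t ε ϑ N) :=
      ⟨B ε ϑ, fun a ha => key ε hε ϑ hϑ N h1 h2 a ha⟩
    constructor
    · exact le_csSup hbdd (h0mem ε hε ϑ hϑ.1.le N)
    · exact csSup_le ⟨0, h0mem ε hε ϑ hϑ.1.le N⟩ (key ε hε ϑ hϑ N h1 h2)
  -- bounds on the N-limsup
  have hHbounds : ∀ ε : ℝ, 0 < ε → ∀ ϑ, ϑ ∈ Ioo 0 t →
      0 ≤ Filter.limsup (fun N : ℕ => sSup (devSet p f t ε ϑ N)) atTop ∧
      Filter.limsup (fun N : ℕ => sSup (devSet p f t ε ϑ N)) atTop ≤ B ε ϑ := by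
    intro ε hε ϑ hϑ
    have hev : ∀ᶠ N : ℕ in atTop, 1 ≤ N ∧ (N:ℝ)⁻¹ ≤ Real.sqrt ϑ := by
      have h1 : ∀ᶠ N : ℕ in atTop, 1 ≤ N := eventually_ge_atTop 1
      have h2 : ∀ᶠ N : ℕ in atTop, (N:ℝ)⁻¹ < Real.sqrt ϑ :=
        tendsto_inv_atTop_nhds_zero_nat.eventually_lt_const (Real.sqrt_pos.2 hϑ.1)
      filter_upwards [h1, h2] with N hN1 hN2
      exact ⟨hN1, hN2.le⟩
    have hev0 : ∀ᶠ N : ℕ in atTop, 0 ≤ sSup (devSet p f t ε ϑ N) :=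
      hev.mono fun N hN => (hGbounds ε hε ϑ hϑ N hN.1 hN.2).1
    have hevB : ∀ᶠ N : ℕ in atTop, sSup (devSet p f t ε ϑ N) ≤ B ε ϑ :=
      hev.mono fun N hN => (hGbounds ε hε ϑ hϑ N hN.1 hN.2).2
    constructor
    · exact le_limsup_of_frequently_le hev0.frequently ⟨B ε ϑ, eventually_map.2 hevB⟩
    · exact limsup_le_of_le (Filter.IsCoboundedUnder.of_frequently_ge hev0.frequently) hevB
  haveI hNB : (nhdsWithin (0:ℝ) (Ioo 0 t)).NeBot := by
    apply mem_closure_iff_nhdsWithin_neBot.1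
    rw [closure_Ioo ht.ne]
    exact ⟨le_rfl, ht.le⟩
  have hst0 : Real.sqrt t ≠ 0 := (Real.sqrt_pos.2 ht).ne'
  -- limit of B as ϑ → 0⁺
  have hBlim : ∀ ε : ℝ, 0 < ε →
      Tendsto (fun ϑ => B ε ϑ) (nhdsWithin 0 (Ioo 0 t))
        (nhds (2*c*M*(ε/Real.sqrt t)^γ)) := by
    intro ε hε
    have hbne : ε / Real.sqrt t ≠ 0 := (div_pos hε (Real.sqrt_pos.2 ht)).ne'
    have hsq0 : Tendsto (fun ϑ : ℝ => Real.sqrt ϑ) (nhds 0) (nhds 0) := by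
      have := Real.continuous_sqrt.tendsto 0
      rwa [Real.sqrt_zero] at this
    have hsubt : Tendsto (fun ϑ : ℝ => Real.sqrt (t - ϑ)) (nhds (0:ℝ)) (nhds (Real.sqrt t)) := by
      have h1 : Tendsto (fun ϑ : ℝ => t - ϑ) (nhds 0) (nhds t) := by
        have := (tendsto_const_nhds (x := t) (f := nhds (0:ℝ))).sub
          (tendsto_id (x := nhds (0:ℝ)))
        simpa using this
      exact (Real.continuous_sqrt.tendsto t).comp h1
    have t1 : Tendsto (fun ϑ : ℝ => c*M*((max (Real.sqrt ϑ) ε)/Real.sqrt (t-ϑ))^γ)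
        (nhds 0) (nhds (c*M*(ε/Real.sqrt t)^γ)) := by
      have l1 : Tendsto (fun ϑ : ℝ => max (Real.sqrt ϑ) ε / Real.sqrt (t-ϑ)) (nhds 0)
          (nhds (ε / Real.sqrt t)) := by
        have lmax : Tendsto (fun ϑ : ℝ => max (Real.sqrt ϑ) ε) (nhds 0) (nhds ε) := by
          have := hsq0.max (tendsto_const_nhds (x := ε))
          rwa [max_eq_right hε.le] at this
        exact lmax.div hsubt hst0
      have l2 := ((Real.continuousAt_rpow_const (ε / Real.sqrt t) γ (Or.inl hbne)).tendsto).comp l1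
      exact l2.const_mul (c*M)
    have t2 : Tendsto (fun ϑ : ℝ => c*M*(ε/Real.sqrt (t-ϑ))^γ)
        (nhds 0) (nhds (c*M*(ε/Real.sqrt t)^γ)) := by
      have l1 : Tendsto (fun ϑ : ℝ => ε / Real.sqrt (t-ϑ)) (nhds 0)
          (nhds (ε / Real.sqrt t)) := (tendsto_const_nhds (x := ε)).div hsubt hst0
      have l2 := ((Real.continuousAt_rpow_const (ε / Real.sqrt t) γ (Or.inl hbne)).tendsto).comp l1
      exact l2.const_mul (c*M)
    have t3 : Tendsto (fun ϑ : ℝ => 2*M*C*Kd*Real.exp (-(ε/2 * (Real.sqrt ϑ)⁻¹)))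
        (nhdsWithin 0 (Ioo 0 t)) (nhds (2*M*C*Kd*0)) := by
      have hs : Tendsto (fun ϑ : ℝ => Real.sqrt ϑ) (nhdsWithin 0 (Ioo 0 t))
          (nhdsWithin 0 (Ioi 0)) := by
        rw [tendsto_nhdsWithin_iff]
        constructor
        · exact hsq0.mono_left nhdsWithin_le_nhds
        · filter_upwards [self_mem_nhdsWithin] with ϑ hϑ
          exact Real.sqrt_pos.2 hϑ.1
      have hi : Tendsto (fun s : ℝ => ε/2 * s⁻¹) (nhdsWithin (0:ℝ) (Ioi 0)) atTop :=
        (tendsto_const_mul_atTop_of_pos (by positivity)).2 tendsto_inv_nhdsGT_zero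
      have he : Tendsto (fun x : ℝ => Real.exp (-x)) atTop (nhds 0) :=
        Real.tendsto_exp_neg_atTop_nhds_zero
      have comp : Tendsto (fun ϑ : ℝ => Real.exp (-(ε/2 * (Real.sqrt ϑ)⁻¹)))
          (nhdsWithin 0 (Ioo 0 t)) (nhds 0) := he.comp (hi.comp hs)
      exact comp.const_mul (2*M*C*Kd)
    have hsum := ((t1.mono_left nhdsWithin_le_nhds).add (t2.mono_left nhdsWithin_le_nhds)).add t3
    have hval : c*M*(ε/Real.sqrt t)^γ + c*M*(ε/Real.sqrt t)^γ + 2*M*C*Kd*0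
        = 2*c*M*(ε/Real.sqrt t)^γ := by ring
    rw [hval] at hsum
    exact hsum
  -- bounds on the ϑ-limsup
  have hΦ : ∀ ε : ℝ, 0 < ε →
      0 ≤ Filter.limsup (fun ϑ : ℝ =>
          Filter.limsup (fun N : ℕ => sSup (devSet p f t ε ϑ N)) atTop)
        (nhdsWithin 0 (Ioo 0 t)) ∧
      Filter.limsup (fun ϑ : ℝ =>
          Filter.limsup (fun N : ℕ => sSup (devSet p f t ε ϑ N)) atTop)
        (nhdsWithin 0 (Ioo 0 t)) ≤ 2*c*M*(ε/Real.sqrt t)^γ := by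
    intro ε hε
    have hevH : ∀ᶠ ϑ in nhdsWithin (0:ℝ) (Ioo 0 t),
        0 ≤ Filter.limsup (fun N : ℕ => sSup (devSet p f t ε ϑ N)) atTop ∧
        Filter.limsup (fun N : ℕ => sSup (devSet p f t ε ϑ N)) atTop ≤ B ε ϑ := by
      filter_upwards [self_mem_nhdsWithin] with ϑ hϑ
      exact hHbounds ε hε ϑ hϑ
    have hcb : Filter.IsCoboundedUnder (· ≤ ·) (nhdsWithin (0:ℝ) (Ioo 0 t))
        (fun ϑ => Filter.limsup (fun N : ℕ => sSup (devSet p f t ε ϑ N)) atTop) :=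
      Filter.IsCoboundedUnder.of_frequently_ge ((hevH.mono fun ϑ hh => hh.1).frequently)
    have hbB : Filter.IsBoundedUnder (· ≤ ·) (nhdsWithin (0:ℝ) (Ioo 0 t)) (fun ϑ => B ε ϑ) :=
      (hBlim ε hε).isBoundedUnder_le
    have hbH : Filter.IsBoundedUnder (· ≤ ·) (nhdsWithin (0:ℝ) (Ioo 0 t))
        (fun ϑ => Filter.limsup (fun N : ℕ => sSup (devSet p f t ε ϑ N)) atTop) :=
      hbB.mono_le (hevH.mono fun ϑ hh => hh.2)
    constructor
    · exact le_limsup_of_frequently_le ((hevH.mono fun ϑ hh => hh.1).frequently) hbH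
    · exact (limsup_le_limsup (hevH.mono fun ϑ hh => hh.2) hcb hbB).trans_eq
        ((hBlim ε hε).limsup_eq)
  -- the limit as ε → 0⁺ of the upper bound
  have hLlim : Tendsto (fun ε : ℝ => 2*c*M*(ε/Real.sqrt t)^γ) (nhdsWithin 0 (Ioi 0))
      (nhds 0) := by
    have l1 : Tendsto (fun ε : ℝ => ε / Real.sqrt t) (nhds 0) (nhds 0) := by
      have := (tendsto_id (x := nhds (0:ℝ))).div_const (Real.sqrt t)
      simpa using this
    have l2 := ((Real.continuousAt_rpow_const 0 γ (Or.inr hγ.le)).tendsto).comp l1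
    rw [Real.zero_rpow hγ.ne'] at l2
    have l3 := l2.const_mul (2*c*M)
    rw [mul_zero] at l3
    exact l3.mono_left nhdsWithin_le_nhds
  -- conclusion by squeezing
  show Tendsto
      (fun ε : ℝ =>
        Filter.limsup
          (fun ϑ : ℝ =>
            Filter.limsup (fun N : ℕ => sSup (devSet p f t ε ϑ N)) atTop)
          (nhdsWithin 0 (Ioo 0 t)))
      (nhdsWithin 0 (Ioi 0)) (nhds 0)
  apply tendsto_of_tendsto_of_tendsto_of_le_of_le' tendsto_const_nhds hLlim
  · filter_upwards [self_mem_nhdsWithin] with ε hε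
    exact (hΦ ε hε).1
  · filter_upwards [self_mem_nhdsWithin] with ε hε
    exact (hΦ ε hε).2
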